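/- For every x ∈ (0,1], the binary entropy function satisfies (1 + x)·h(1/(1+x)) ≤ √(2x), where h(p) = −p log p − (1−p) log(1−p). -/

import Mathlib

open Matrix MeasureTheory
open scoped ComplexOrder

noncomputable section

variable {n : Type*} [Fintype n] [DecidableEq n]

/-- Matrix logarithm via spectral decomposition (junk value 0 for non-Hermitian input). -/
def matLog (M : Matrix n n ℂ) : Matrix n n ℂ :=
  if h : M.IsHermitian then
    (h.eigenvectorUnitary : Matrix n n ℂ) *
      Matrix.diagonal (fun i => (Real.log (h.eigenvalues i) : ℂ)) *
      (star h.eigenvectorUnitary : Matrix n n ℂ)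
  else 0

/-- Complex matrix power via spectral decomposition (junk value 0 for non-Hermitian input). -/
def matCPow (M : Matrix n n ℂ) (z : ℂ) : Matrix n n ℂ :=
  if h : M.IsHermitian then
    (h.eigenvectorUnitary : Matrix n n ℂ) *
      Matrix.diagonal (fun i => ((h.eigenvalues i : ℂ) ^ z)) *
      (star h.eigenvectorUnitary : Matrix n n ℂ)
  else 0

/-- von Neumann entropy `S(ρ) = -Tr[ρ log ρ]`. -/
def vnEntropy (M : Matrix n n ℂ) : ℝ := -(Matrix.trace (M * matLog M)).re

/-- Quantum relative entropy `D(ρ‖σ) = Tr[ρ (log ρ - log σ)]`. -/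
def relEntropy (ρ σ : Matrix n n ℂ) : ℝ := (Matrix.trace (ρ * (matLog ρ - matLog σ))).re

/-- Operator norm of a matrix. -/
def opNorm (M : Matrix n n ℂ) : ℝ := ‖Matrix.toEuclideanCLM (𝕜 := ℂ) M‖

/-- Old Mathlib `Matrix.PosSemidef.sqrt` (removed), with its Dec 2024 definition. -/
def psdSqrt {M : Matrix n n ℂ} (hM : M.PosSemidef) : Matrix n n ℂ :=
  (hM.1.eigenvectorUnitary : Matrix n n ℂ) *
    Matrix.diagonal ((↑) ∘ (Real.sqrt ·) ∘ hM.1.eigenvalues) *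
    (star hM.1.eigenvectorUnitary : Matrix n n ℂ)

/-- Trace norm `‖A‖₁ = Tr √(AᴴA)`. -/
def traceNorm (A : Matrix n n ℂ) : ℝ :=
  ((psdSqrt (Matrix.posSemidef_conjTranspose_mul_self A)).trace).re

/-- Positive semidefinite square root (junk value 0 otherwise). -/
def sqrtPSD (M : Matrix n n ℂ) : Matrix n n ℂ :=
  open scoped Classical in
  if h : M.PosSemidef then psdSqrt h else 0

/-- Fidelity `F(ρ,σ) = ‖√ρ √σ‖₁`. -/
def fidelity (ρ σ : Matrix n n ℂ) : ℝ := traceNorm (sqrtPSD ρ * sqrtPSD σ)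

/-- Binary entropy (natural logarithm). -/
def binEnt (p : ℝ) : ℝ := -(p * Real.log p) - (1 - p) * Real.log (1 - p)

section ptrace
variable {α β : Type*} [Fintype α] [Fintype β]

/-- Partial trace over the first tensor factor. -/
def ptraceFst (M : Matrix (α × β) (α × β) ℂ) : Matrix β β ℂ :=
  fun i j => ∑ a : α, M (a, i) (a, j)

/-- Partial trace over the second tensor factor. -/
def ptraceSnd (M : Matrix (α × β) (α × β) ℂ) : Matrix α α ℂ :=
  fun i j => ∑ b : β, M (i, b) (j, b)

end ptrace

/-! The entropy term splits as `log (1 + x) + x log ((1 + x) / x)`. Each logarithm is bounded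
via `log t ≤ (t - 1) / √t` for `t ≥ 1` (the logarithmic mean dominates the geometric mean),
giving `(x + √x) / √(1 + x)`, and `(x + √x)² ≤ 2x(1 + x)` is `(x - √x)² ≥ 0`. -/

open Real

lemma two_mul_log_le_sub_inv {s : ℝ} (hs : 1 ≤ s) : 2 * log s ≤ s - s⁻¹ := by
  have h := self_le_sinh_iff.mpr (log_nonneg hs)
  rw [sinh_log (by linarith)] at h
  linarith

lemma log_le_sub_one_div_sqrt {t : ℝ} (ht : 1 ≤ t) : log t ≤ (t - 1) / √t := by
  have hs : 1 ≤ √t := one_le_sqrt.mpr ht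
  have key := two_mul_log_le_sub_inv hs
  rw [log_sqrt (by linarith)] at key
  calc log t ≤ √t - (√t)⁻¹ := by linarith
    _ = (t - 1) / √t := by
      field_simp
      rw [sq_sqrt (by linarith)]

lemma mul_log_div_le {a c : ℝ} (ha : 0 < a) (hac : a ≤ c) :
    a * log (c / a) ≤ (c - a) * √a / √c := by
  calc a * log (c / a) ≤ a * ((c / a - 1) / √(c / a)) :=
        mul_le_mul_of_nonneg_left (log_le_sub_one_div_sqrt ((one_le_div ha).mpr hac)) ha.le
    _ = (c - a) * √a / √c := by
      rw [sqrt_div' c ha.le]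
      field_simp

lemma add_mul_binEnt_div_add {a b : ℝ} (ha : 0 < a) (hb : 0 < b) :
    (a + b) * binEnt (a / (a + b)) = a * log ((a + b) / a) + b * log ((a + b) / b) := by
  have hab : 0 < a + b := by linarith
  have h1 : 1 - a / (a + b) = b / (a + b) := by field_simp; ring
  rw [binEnt, h1, log_div ha.ne' hab.ne', log_div hb.ne' hab.ne',
    log_div hab.ne' ha.ne', log_div hab.ne' hb.ne']
  field_simp
  ring

lemma add_sqrt_div_sqrt_one_add_le {x : ℝ} (hx : 0 ≤ x) : (x + √x) / √(1 + x) ≤ √(2 * x) := by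
  rw [div_le_iff₀ (sqrt_pos.mpr (by linarith)), ← sqrt_mul (by linarith)]
  refine le_sqrt_of_sq_le ?_
  nlinarith [sq_nonneg (x - √x), sq_sqrt hx]

/-- `(1+x) h(1/(1+x)) ≤ √(2x)` for `x ∈ (0,1]`. -/
theorem stmt8 : ∀ x : ℝ, 0 < x → x ≤ 1 →
    (1 + x) * binEnt (1 / (1 + x)) ≤ Real.sqrt (2 * x) := by
  intro x hx _
  calc (1 + x) * binEnt (1 / (1 + x))
      = 1 * log ((1 + x) / 1) + x * log ((1 + x) / x) := add_mul_binEnt_div_add one_pos hx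
    _ ≤ (1 + x - 1) * √1 / √(1 + x) + (1 + x - x) * √x / √(1 + x) :=
        add_le_add (mul_log_div_le one_pos (by linarith)) (mul_log_div_le hx (by linarith))
    _ = (x + √x) / √(1 + x) := by rw [sqrt_one]; ring
    _ ≤ √(2 * x) := add_sqrt_div_sqrt_one_add_le hx.le

end
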